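/- arXiv:2010.08024 — 2 statements merged into one kernel-verified Lean document; each statement's English description precedes it below -/
import Mathlib

section
/- The function I_{2c} = u_x²·u_{yy} − 2·u_x·u_y·u_{xy} + u_y²·u_{xx} on the second jet space of functions on ℝ² is invariant under the second prolongation of the sl(2,ℝ) action generated by X₁ = x∂_y, X₂ = x∂_x − y∂_y, X₃ = y∂_x, i.e., L_{X^{(2)}} I_{2c} = 0 for each generator X. -/
open Matrix

noncomputable section

/-- Coordinates on `J²ℝ²`: `(x, y, u, u_x, u_y, u_xx, u_xy, u_yy)`. -/
def I2c : (Fin 8 → ℝ) → ℝ := fun p =>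
  (p 3) ^ 2 * p 7 - 2 * p 3 * p 4 * p 6 + (p 4) ^ 2 * p 5

/-- Second prolongation of `X₁ = x∂_y`. -/
def X1prol2 : (Fin 8 → ℝ) → (Fin 8 → ℝ) := fun p =>
  ![0, p 0, 0, -(p 4), 0, -2 * p 6, -(p 7), 0]

/-- Second prolongation of `X₂ = x∂_x − y∂_y`. -/
def X2prol2 : (Fin 8 → ℝ) → (Fin 8 → ℝ) := fun p =>
  ![p 0, -(p 1), 0, -(p 3), p 4, -2 * p 5, 0, 2 * p 7]

/-- Second prolongation of `X₃ = y∂_x`. -/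
def X3prol2 : (Fin 8 → ℝ) → (Fin 8 → ℝ) := fun p =>
  ![p 1, 0, 0, 0, -(p 3), 0, -(p 5), -2 * p 6]

theorem fderiv_I2c_apply (p v : Fin 8 → ℝ) :
    fderiv ℝ I2c p v =
      2 * (p 3 * p 7 - p 4 * p 6) * v 3 + 2 * (p 4 * p 5 - p 3 * p 6) * v 4
        + p 4 ^ 2 * v 5 - 2 * p 3 * p 4 * v 6 + p 3 ^ 2 * v 7 := by
  have fderiv_coord (i : Fin 8) :
      fderiv ℝ (fun q : Fin 8 → ℝ => q i) p = ContinuousLinearMap.proj i :=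
    (hasFDerivAt_apply i p).fderiv
  unfold I2c
  simp (disch := fun_prop) only [fderiv_fun_sub, fderiv_fun_add, fderiv_fun_mul, fderiv_fun_pow,
    fderiv_coord]
  simp only [fderiv_fun_const, Pi.zero_apply, smul_zero, add_zero, _root_.add_apply,
    _root_.sub_apply, _root_.smul_apply, ContinuousLinearMap.proj_apply,
    smul_eq_mul, nsmul_eq_mul]
  ring

theorem stmt_1 : ∀ p : Fin 8 → ℝ,
    fderiv ℝ I2c p (X1prol2 p) = 0 ∧
    fderiv ℝ I2c p (X2prol2 p) = 0 ∧
    fderiv ℝ I2c p (X3prol2 p) = 0 := by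
  intro p
  refine ⟨?_, ?_, ?_⟩ <;>
    simp only [fderiv_I2c_apply, X1prol2, X2prol2, X3prol2, cons_val] <;>
    ring
end
end

section
/- The function I_{2a} = (u_x²u_{zz} − 2u_xu_zu_{xz} + u_z²u_{xx} + 2u_xu_{yz} − 2u_zu_{xy} + u_{yy})/(x u_x + y u_y + z u_z − u)³ equals Q(v₁,v₁), where Q = d²q|_{TΣ}/(x u_x + y u_y + z u_z − u) is the normalized second differential of the defining function q = −u + u(x,y,z), and v₁ = (x u_x + y u_y + z u_z − u)⁻¹(∂_y − u_z∂_x + u_x∂_z + u_y∂_u). -/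
/-- Vectors are written in coordinates for the tangent basis `(D_x, D_y, D_z)`, in which
`d²q|_{TΣ}` has Gram matrix `(u_{ij})`. -/
theorem stmt_12_general (x y z u ux uy uz uxx uxy uxz uyy uyz uzz : ℝ) :
    let ρ := x * ux + y * uy + z * uz - u
    -- d²q|_{TΣ} evaluated on the (un-normalized) vector (−u_z, 1, u_x):
    let B : (ℝ × ℝ × ℝ) → (ℝ × ℝ × ℝ) → ℝ := fun v w =>
      uxx * v.1 * w.1 + uyy * v.2.1 * w.2.1 + uzz * v.2.2 * w.2.2 +
      uxy * (v.1 * w.2.1 + v.2.1 * w.1) + uxz * (v.1 * w.2.2 + v.2.2 * w.1) +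
      uyz * (v.2.1 * w.2.2 + v.2.2 * w.2.1)
    let v1 : ℝ × ℝ × ℝ := (ρ⁻¹ * (-uz), ρ⁻¹ * 1, ρ⁻¹ * ux)
    (ux ^ 2 * uzz - 2 * ux * uz * uxz + uz ^ 2 * uxx + 2 * ux * uyz - 2 * uz * uxy + uyy)
      / ρ ^ 3 = ρ⁻¹ * B v1 v1 := by
  intro ρ B v1
  -- keep `ρ` opaque, otherwise `ring` expands `ρ ^ 3` but not `ρ⁻¹`
  clear_value ρ
  have homogeneous : B v1 v1 = ρ⁻¹ ^ 2 * B (-uz, 1, ux) (-uz, 1, ux) := by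
    simp only [B, v1]; ring
  have numerator : B (-uz, 1, ux) (-uz, 1, ux) =
      ux ^ 2 * uzz - 2 * ux * uz * uxz + uz ^ 2 * uxx + 2 * ux * uyz - 2 * uz * uxy + uyy := by
    simp only [B]; ring
  rw [homogeneous, numerator]
  ring

/-- `I_{2a} = Q(v₁,v₁)` where `Q = d²q|_{TΣ}/ρ` with `ρ = x u_x + y u_y + z u_z − u`,
and `v₁` has coordinates `ρ⁻¹(−u_z, 1, u_x)` in the tangent basis
`(D_x, D_y, D_z)`, the Gram matrix of `d²q|_{TΣ}` being `(u_{ij})`. -/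
theorem stmt_12 (x y z u ux uy uz uxx uxy uxz uyy uyz uzz : ℝ)
    (hρ : x * ux + y * uy + z * uz - u ≠ 0) :
    let ρ := x * ux + y * uy + z * uz - u
    -- d²q|_{TΣ} evaluated on the (un-normalized) vector (−u_z, 1, u_x):
    let B : (ℝ × ℝ × ℝ) → (ℝ × ℝ × ℝ) → ℝ := fun v w =>
      uxx * v.1 * w.1 + uyy * v.2.1 * w.2.1 + uzz * v.2.2 * w.2.2 +
      uxy * (v.1 * w.2.1 + v.2.1 * w.1) + uxz * (v.1 * w.2.2 + v.2.2 * w.1) +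
      uyz * (v.2.1 * w.2.2 + v.2.2 * w.2.1)
    let v1 : ℝ × ℝ × ℝ := (ρ⁻¹ * (-uz), ρ⁻¹ * 1, ρ⁻¹ * ux)
    (ux ^ 2 * uzz - 2 * ux * uz * uxz + uz ^ 2 * uxx + 2 * ux * uyz - 2 * uz * uxy + uyy)
      / ρ ^ 3 = ρ⁻¹ * B v1 v1 :=
  stmt_12_general x y z u ux uy uz uxx uxy uxz uyy uyz uzz
end
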